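/- arXiv:1706.02368 — 2 statements merged into one kernel-verified Lean document; each statement's English description precedes it below -/
import Mathlib

section
/- If two partitioned tuples M and M' in a group G are equivalent via elementary moves on partitioned tuples, then their underlying tuples are Nielsen equivalent. -/
/-- Elementary Nielsen moves on a tuple (encoded as a list) of elements of a group `G`. -/
inductive NielsenMove {G : Type*} [Group G] : List G → List G → Prop
  | inv (L : List G) (i : ℕ) (hi : i < L.length) :
      NielsenMove L (L.set i (L.get ⟨i, hi⟩)⁻¹)
  | swap (L : List G) (i j : ℕ) (hi : i < L.length) (hj : j < L.length) (hij : i ≠ j) :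
      NielsenMove L ((L.set i (L.get ⟨j, hj⟩)).set j (L.get ⟨i, hi⟩))
  | mul (L : List G) (i j : ℕ) (hi : i < L.length) (hj : j < L.length) (hij : i ≠ j) :
      NielsenMove L (L.set i (L.get ⟨i, hi⟩ * L.get ⟨j, hj⟩))

/-- Nielsen equivalence of tuples. -/
def NielsenEquiv {G : Type*} [Group G] : List G → List G → Prop :=
  Relation.ReflTransGen NielsenMove

/-- A partitioned tuple `(Y₁, …, Y_s; T)` is encoded as a pair `(Ys, T)` of a list of
tuples and a tuple. -/
abbrev PartitionedTuple (G : Type*) := List (List G) × List G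

/-- The underlying tuple of a partitioned tuple: the concatenation `(Y₁, …, Y_s, T)`. -/
def PartitionedTuple.underlying {G : Type*} (M : PartitionedTuple G) : List G :=
  M.1.flatten ++ M.2

/-- Elementary moves on partitioned tuples: conjugate some `Yᵢ` by an element of the
subgroup generated by the other `Yⱼ` and `T`, or replace an entry `t_k` of `T` by
`u * t_k * u'` with `u, u'` in the subgroup generated by all the `Yⱼ` and the other
entries of `T`. -/
inductive PartitionedMove {G : Type*} [Group G] :
    PartitionedTuple G → PartitionedTuple G → Prop
  | conj (Ys : List (List G)) (T : List G) (i : ℕ) (hi : i < Ys.length) (g : G)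
      (hg : g ∈ Subgroup.closure
        ({x | ∃ j, j ≠ i ∧ ∃ hj : j < Ys.length, x ∈ Ys.get ⟨j, hj⟩} ∪ {x | x ∈ T})) :
      PartitionedMove (Ys, T)
        (Ys.set i ((Ys.get ⟨i, hi⟩).map (fun y => g * y * g⁻¹)), T)
  | slide (Ys : List (List G)) (T : List G) (k : ℕ) (hk : k < T.length) (u u' : G)
      (hu : u ∈ Subgroup.closure
        ({x | ∃ Y ∈ Ys, x ∈ Y} ∪ {x | ∃ l, l ≠ k ∧ ∃ hl : l < T.length, x = T.get ⟨l, hl⟩}))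
      (hu' : u' ∈ Subgroup.closure
        ({x | ∃ Y ∈ Ys, x ∈ Y} ∪ {x | ∃ l, l ≠ k ∧ ∃ hl : l < T.length, x = T.get ⟨l, hl⟩})) :
      PartitionedMove (Ys, T) (Ys, T.set k (u * T.get ⟨k, hk⟩ * u'))

/-- Equivalence of partitioned tuples: a finite chain of elementary moves. -/
def PartitionedEquiv {G : Type*} [Group G] :
    PartitionedTuple G → PartitionedTuple G → Prop :=
  Relation.ReflTransGen PartitionedMove

/-!
Every elementary move on a partitioned tuple is a composite of Nielsen moves on its underlying
tuple. The key fact is that an entry may be multiplied on the right by any element of the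
subgroup generated by the other entries: for generators this is a single Nielsen move, and
closure under inverses uses that Nielsen equivalence is symmetric (a multiplication move is
undone by inverting the other entry, multiplying, and inverting back). Left multiplication is
right multiplication of the inverted entry, which handles the moves on `T`. A block `Yᵢ`
is conjugated one entry at a time; the conjugating element stays in the subgroup generated by
the remaining entries because it only involves the other blocks and `T`.
-/

namespace NielsenEquiv

variable {G : Type*} [Group G]

@[refl]
theorem refl (L : List G) : NielsenEquiv L L :=
  Relation.ReflTransGen.refl

@[trans]
theorem trans {L₁ L₂ L₃ : List G} (h₁₂ : NielsenEquiv L₁ L₂) (h₂₃ : NielsenEquiv L₂ L₃) :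
    NielsenEquiv L₁ L₃ :=
  Relation.ReflTransGen.trans h₁₂ h₂₃

theorem set_inv (L : List G) {i : ℕ} (hi : i < L.length) : NielsenEquiv L (L.set i L[i]⁻¹) :=
  .single (.inv L i hi)

theorem set_mul (L : List G) {i j : ℕ} (hi : i < L.length) (hj : j < L.length) (hij : i ≠ j) :
    NielsenEquiv L (L.set i (L[i] * L[j])) :=
  .single (.mul L i j hi hj hij)

theorem set_mul_inv (L : List G) {i j : ℕ} (hi : i < L.length) (hj : j < L.length)
    (hij : i ≠ j) : NielsenEquiv L (L.set i (L[i] * L[j]⁻¹)) := by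
  have h₁ := set_inv L hj
  have h₂ := set_mul (L.set j L[j]⁻¹) (by simpa) (by simpa) hij
  have h₃ := set_inv ((L.set j L[j]⁻¹).set i (L[i] * L[j]⁻¹)) (i := j) (by simpa)
  simp only [List.getElem_set_self, List.getElem_set_ne hij.symm, List.getElem_set_ne hij,
    inv_inv] at h₂ h₃
  have hset :
      ((L.set j L[j]⁻¹).set i (L[i] * L[j]⁻¹)).set j L[j] = L.set i (L[i] * L[j]⁻¹) := by
    apply List.ext_getElem <;> grind
  exact h₁.trans (h₂.trans (hset ▸ h₃))

theorem _root_.NielsenMove.nielsenEquiv_symm {L L' : List G}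
    (h : NielsenMove L L') : NielsenEquiv L' L := by
  cases h with
  | inv i hi =>
    have := NielsenEquiv.set_inv (L.set i L[i]⁻¹) (i := i) (by simpa)
    rwa [List.getElem_set_self, inv_inv, List.set_set, List.set_getElem_self] at this
  | swap i j hi hj hij =>
    have := NielsenMove.swap ((L.set i L[j]).set j L[i]) i j (by simpa) (by simpa) hij
    simp only [List.get_eq_getElem, List.getElem_set_self, List.getElem_set_ne hij.symm] at this
    have hset : (((L.set i L[j]).set j L[i]).set i L[i]).set j L[j] = L := by
      apply List.ext_getElem <;> grind
    rw [hset] at this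
    exact .single this
  | mul i j hi hj hij =>
    have := NielsenEquiv.set_mul_inv (L.set i (L[i] * L[j])) (i := i) (j := j) (by simpa)
      (by simpa) hij
    rwa [List.getElem_set_self, List.getElem_set_ne hij, mul_inv_cancel_right, List.set_set,
      List.set_getElem_self] at this

theorem symm {L L' : List G} (h : NielsenEquiv L L') : NielsenEquiv L' L := by
  induction h with
  | refl => rfl
  | tail _ step ih => exact step.nielsenEquiv_symm.trans ih

theorem set_mul_of_mem_closure (L : List G) {k : ℕ} (hk : k < L.length) {g : G}
    (hg : g ∈ Subgroup.closure {x | x ∈ L.eraseIdx k}) :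
    NielsenEquiv L (L.set k (L[k] * g)) := by
  suffices ∀ a, NielsenEquiv (L.set k a) (L.set k (a * g)) by
    simpa only [List.set_getElem_self hk] using this L[k]
  induction hg using Subgroup.closure_induction with
  | mem x hx =>
    intro a
    obtain ⟨j, hj, hjk, rfl⟩ := List.mem_eraseIdx_iff_getElem.mp hx
    have := set_mul (L.set k a) (i := k) (j := j) (by simpa) (by simpa) hjk.symm
    rwa [List.getElem_set_self, List.getElem_set_ne hjk.symm, List.set_set] at this
  | one => exact fun a => by rw [mul_one]
  | mul x y _ _ hx hy => exact fun a => by simpa only [mul_assoc] using (hx a).trans (hy (a * x))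
  | inv x _ hx => exact fun a => by simpa using (hx (a * x⁻¹)).symm

theorem set_mul_mul_of_mem_closure (L : List G) {k : ℕ} (hk : k < L.length) {u v : G}
    (hu : u ∈ Subgroup.closure {x | x ∈ L.eraseIdx k})
    (hv : v ∈ Subgroup.closure {x | x ∈ L.eraseIdx k}) :
    NielsenEquiv L (L.set k (u * L[k] * v)) := by
  -- `u * x * v = ((x * v)⁻¹ * u⁻¹)⁻¹`
  have h₁ := set_mul_of_mem_closure L hk hv
  have h₂ := set_inv (L.set k (L[k] * v)) (i := k) (by simpa)
  have h₃ := set_mul_of_mem_closure ((L.set k (L[k] * v)).set k (L[k] * v)⁻¹) (k := k)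
    (by simpa) (g := u⁻¹) (by simpa [List.eraseIdx_set_eq] using inv_mem hu)
  have h₄ := set_inv (((L.set k (L[k] * v)).set k (L[k] * v)⁻¹).set k ((L[k] * v)⁻¹ * u⁻¹))
    (i := k) (by simpa)
  simp only [List.getElem_set_self, List.set_set, ← mul_inv_rev, inv_inv, ← mul_assoc]
    at h₂ h₃ h₄
  exact h₁.trans (h₂.trans (h₃.trans h₄))

theorem append_cons_mul_mul (A B : List G) (x : G) {u v : G}
    (hu : u ∈ Subgroup.closure {y | y ∈ A ++ B}) (hv : v ∈ Subgroup.closure {y | y ∈ A ++ B}) :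
    NielsenEquiv (A ++ x :: B) (A ++ (u * x * v) :: B) := by
  have herase : (A ++ x :: B).eraseIdx A.length = A ++ B := by
    simp [List.eraseIdx_append_of_length_le le_rfl]
  have h := set_mul_mul_of_mem_closure (A ++ x :: B) (k := A.length) (by simp)
    (herase ▸ hu) (herase ▸ hv)
  simpa [List.set_append_right _ _ le_rfl] using h

theorem append_map_conj_append (Y : List G) {A B : List G} {g : G}
    (hg : g ∈ Subgroup.closure {y | y ∈ A ++ B}) :
    NielsenEquiv (A ++ Y ++ B) (A ++ Y.map (fun y => g * y * g⁻¹) ++ B) := by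
  induction Y generalizing A with
  | nil => rfl
  | cons y Y ih =>
    have mono (C : List G) : Subgroup.closure {y | y ∈ A ++ B} ≤
        Subgroup.closure {y | y ∈ A ++ (C ++ B)} :=
      Subgroup.closure_mono fun z hz => by
        simp only [Set.mem_ofPred_eq, List.mem_append] at hz ⊢; tauto
    have h₁ := append_cons_mul_mul A (Y ++ B) y (mono Y hg) (inv_mem (mono Y hg))
    have h₂ := ih (A := A ++ [g * y * g⁻¹]) (by simpa only [List.append_assoc] using mono _ hg)
    simp only [List.append_assoc, List.singleton_append] at h₁ h₂
    simpa using h₁.trans h₂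

end NielsenEquiv

namespace PartitionedTuple

variable {G : Type*} [Group G]

theorem nielsenEquiv_underlying_conj (Ys : List (List G)) (T : List G) {i : ℕ}
    (hi : i < Ys.length) {g : G}
    (hg : g ∈ Subgroup.closure
      ({x | ∃ j, j ≠ i ∧ ∃ hj : j < Ys.length, x ∈ Ys[j]} ∪ {x | x ∈ T})) :
    NielsenEquiv (underlying (Ys, T))
      (underlying (Ys.set i (Ys[i].map (fun y => g * y * g⁻¹)), T)) := by
  have hsplit (Z : List G) : Ys.set i Z = Ys.take i ++ Z :: Ys.drop (i + 1) := by
    rw [List.set_eq_take_append_cons_drop, if_pos hi]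
  have hflat : Ys.flatten = (Ys.take i).flatten ++ Ys[i] ++ (Ys.drop (i + 1)).flatten := by
    have := congrArg List.flatten (hsplit Ys[i])
    rw [List.set_getElem_self, List.flatten_append, List.flatten_cons] at this
    rwa [List.append_assoc]
  have hgens : {x | ∃ j, j ≠ i ∧ ∃ hj : j < Ys.length, x ∈ Ys[j]} ∪ {x | x ∈ T} ⊆
      {x | x ∈ (Ys.take i).flatten ++ ((Ys.drop (i + 1)).flatten ++ T)} := by
    rintro x (⟨j, hji, hj, hx⟩ | hx)
    · have hYj : Ys[j] ∈ Ys.eraseIdx i := List.mem_eraseIdx_iff_getElem.mpr ⟨j, hj, hji, rfl⟩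
      have : x ∈ (Ys.eraseIdx i).flatten := List.mem_flatten.mpr ⟨_, hYj, hx⟩
      simp only [List.eraseIdx_eq_take_drop_succ, List.flatten_append, List.mem_append] at this
      simp only [Set.mem_ofPred_eq, List.mem_append]
      tauto
    · simp only [Set.mem_ofPred_eq, List.mem_append] at hx ⊢
      tauto
  have h := NielsenEquiv.append_map_conj_append Ys[i] (Subgroup.closure_mono hgens hg)
  simpa [underlying, hsplit, hflat] using h

theorem nielsenEquiv_underlying_slide (Ys : List (List G)) (T : List G) {k : ℕ}
    (hk : k < T.length) {u u' : G}
    (hu : u ∈ Subgroup.closure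
      ({x | ∃ Y ∈ Ys, x ∈ Y} ∪ {x | ∃ l, l ≠ k ∧ ∃ hl : l < T.length, x = T[l]}))
    (hu' : u' ∈ Subgroup.closure
      ({x | ∃ Y ∈ Ys, x ∈ Y} ∪ {x | ∃ l, l ≠ k ∧ ∃ hl : l < T.length, x = T[l]})) :
    NielsenEquiv (underlying (Ys, T)) (underlying (Ys, T.set k (u * T[k] * u'))) := by
  have hsplit (z : G) : T.set k z = T.take k ++ z :: T.drop (k + 1) := by
    rw [List.set_eq_take_append_cons_drop, if_pos hk]
  have hgens : {x | ∃ Y ∈ Ys, x ∈ Y} ∪ {x | ∃ l, l ≠ k ∧ ∃ hl : l < T.length, x = T[l]} ⊆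
      {x | x ∈ (Ys.flatten ++ T.take k) ++ T.drop (k + 1)} := by
    rintro x (⟨Y, hY, hx⟩ | ⟨l, hlk, hl, rfl⟩)
    · simp only [Set.mem_ofPred_eq, List.mem_append, List.mem_flatten]
      exact .inl (.inl ⟨Y, hY, hx⟩)
    · have : T[l] ∈ T.eraseIdx k := List.mem_eraseIdx_iff_getElem.mpr ⟨l, hl, hlk, rfl⟩
      simp only [List.eraseIdx_eq_take_drop_succ, List.mem_append] at this
      simp only [Set.mem_ofPred_eq, List.mem_append]
      tauto
  have h := NielsenEquiv.append_cons_mul_mul (Ys.flatten ++ T.take k) (T.drop (k + 1)) T[k]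
    (Subgroup.closure_mono hgens hu) (Subgroup.closure_mono hgens hu')
  have hT := hsplit T[k]
  rw [List.set_getElem_self] at hT
  rw [List.append_assoc, ← hT] at h
  simpa [underlying, hsplit] using h

end PartitionedTuple

theorem PartitionedMove.nielsenEquiv_underlying {G : Type*} [Group G]
    {M M' : PartitionedTuple G} (h : PartitionedMove M M') :
    NielsenEquiv M.underlying M'.underlying := by
  cases h with
  | conj Ys T i hi g hg => exact PartitionedTuple.nielsenEquiv_underlying_conj Ys T hi hg
  | slide Ys T k hk u u' hu hu' =>
    exact PartitionedTuple.nielsenEquiv_underlying_slide Ys T hk hu hu'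

theorem partitionedEquiv_underlying_nielsenEquiv_general {G : Type*} [Group G]
    (M M' : PartitionedTuple G)
    (h : PartitionedEquiv M M') :
    NielsenEquiv M.underlying M'.underlying := by
  induction h with
  | refl => rfl
  | tail _ step ih => exact ih.trans step.nielsenEquiv_underlying

/-- If two partitioned tuples are equivalent via elementary moves, then their underlying
tuples are Nielsen equivalent. -/
theorem partitionedEquiv_underlying_nielsenEquiv {G : Type*} [Group G]
    (M M' : PartitionedTuple G)
    (hne : M.1 ≠ [] ∨ M.2 ≠ [])
    (hY : ∀ Y ∈ M.1, Subgroup.closure {x | x ∈ Y} ≠ ⊥)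
    (h : PartitionedEquiv M M') :
    NielsenEquiv M.underlying M'.underlying :=
  partitionedEquiv_underlying_nielsenEquiv_general M M' h
end

section
/- Let F = F_m * ⟨a_1, a_2⟩ be a free group (m ≥ 3) and let φ be an automorphism of F with φ(F_m) = F_m, φ(a_1) = a_2, and φ(a_2) = w·a_1·v for some w, v ∈ F_m. Then for every odd k, there exist w_k, v_k, w'_k, v'_k ∈ F_m with φ^k(a_1) = w_k·a_2·v_k and φ^k(a_2) = w'_k·a_1·v'_k. Consequently the semidirect product G_{φ^k} = F ⋊_{φ^k} ℤ is generated by F_m, a_1, and the stable letter, so rank(G_{φ^k}) ≤ m + 2 < rank(F) + 1. -/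
open Finset Module in
private lemma freeGroup_rank_lower (n : ℕ) [Group.FG (FreeGroup (Fin n))] :
    n ≤ Group.rank (FreeGroup (Fin n)) := by
  classical
  obtain ⟨S, hcard, hclos⟩ := Group.rank_spec (FreeGroup (Fin n))
  set f : FreeGroup (Fin n) →* Multiplicative (Fin n → ZMod 2) :=
    FreeGroup.lift (fun i => Multiplicative.ofAdd (Pi.single i (1 : ZMod 2))) with hf
  have hofval : ∀ vv : Fin n → ZMod 2,
      ∑ i : Fin n, (vv i).val • (Pi.single i (1 : ZMod 2) : Fin n → ZMod 2) = vv := by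
    intro vv
    have : ∀ i : Fin n, (vv i).val • (Pi.single i (1 : ZMod 2) : Fin n → ZMod 2) = Pi.single i (vv i) := by
      intro i
      rw [← Pi.single_smul' i ((vv i).val) (1 : ZMod 2), nsmul_eq_mul, mul_one,
        ZMod.natCast_val, ZMod.cast_id]
    simp only [this, Finset.univ_sum_single]
  have hsurj : Function.Surjective f := by
    intro y
    refine ⟨(List.ofFn fun i : Fin n =>
      (FreeGroup.of i) ^ ((Multiplicative.toAdd y) i).val).prod, ?_⟩
    rw [map_list_prod, List.map_ofFn, List.prod_ofFn]
    simp only [Function.comp, map_pow, hf, FreeGroup.lift_apply_of, ← ofAdd_nsmul]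
    rw [← ofAdd_sum, hofval]
    simp
  have hmap : Subgroup.closure (f '' (S : Set (FreeGroup (Fin n)))) = ⊤ := by
    rw [← MonoidHom.map_closure, hclos, ← MonoidHom.range_eq_map,
      MonoidHom.range_eq_top_of_surjective f hsurj]
  set T : Finset (Fin n → ZMod 2) := S.image (fun s => Multiplicative.toAdd (f s)) with hT
  have hspan : Submodule.span (ZMod 2) (↑T : Set (Fin n → ZMod 2)) = ⊤ := by
    rw [Submodule.eq_top_iff']
    intro x
    have hx : Multiplicative.ofAdd x ∈ Subgroup.closure (f '' (S : Set (FreeGroup (Fin n)))) := by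
      rw [hmap]; trivial
    have : ∀ g ∈ Subgroup.closure (f '' (S : Set (FreeGroup (Fin n)))),
        Multiplicative.toAdd g ∈ Submodule.span (ZMod 2) (↑T : Set (Fin n → ZMod 2)) := by
      intro g hg
      induction hg using Subgroup.closure_induction with
      | mem g hgm =>
        obtain ⟨s, hs, rfl⟩ := hgm
        exact Submodule.subset_span (by exact Finset.mem_image_of_mem _ hs)
      | one => simpa using Submodule.zero_mem _
      | mul a b _ _ ha hb => simpa using Submodule.add_mem _ ha hb
      | inv a _ ha => simpa using Submodule.neg_mem _ ha
    simpa using this _ hx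
  have h1 : finrank (ZMod 2) (Fin n → ZMod 2) ≤ T.card := by
    have := finrank_span_finset_le_card (R := ZMod 2) T
    rwa [Set.finrank, hspan, finrank_top] at this
  have h2 : finrank (ZMod 2) (Fin n → ZMod 2) = n := by
    simp [Module.finrank_pi]
  calc n = finrank (ZMod 2) (Fin n → ZMod 2) := h2.symm
    _ ≤ T.card := h1
    _ ≤ S.card := Finset.card_image_le
    _ = Group.rank (FreeGroup (Fin n)) := hcard

open SemidirectProduct

/-- Brinkmann's counterexample pattern.  Let `F` be free on `m + 2` generators, with
`F_m` the subgroup generated by the first `m` generators and `a₁, a₂` the last two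
generators.  Suppose `φ ∈ Aut(F)` satisfies `φ(F_m) = F_m`, `φ(a₁) = a₂` and
`φ(a₂) = w a₁ v` with `w, v ∈ F_m`.  Then for every odd `k`, `φᵏ(a₁) = w_k a₂ v_k` and
`φᵏ(a₂) = w'_k a₁ v'_k` for some `w_k, v_k, w'_k, v'_k ∈ F_m`; consequently the
semidirect product `F ⋊_{φᵏ} ℤ` is generated by `F_m`, `a₁` and the stable letter, and
so has a generating set of cardinality at most `m + 2 < rank F + 1`. -/
theorem brinkmann_counterexample (m : ℕ) (hm : 3 ≤ m)
    [Group.FG (FreeGroup (Fin (m + 2)))]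
    (φ : MulAut (FreeGroup (Fin (m + 2))))
    (Sgen : Set (FreeGroup (Fin (m + 2))))
    (hSgen : Sgen = Set.range fun i : Fin m => FreeGroup.of (Fin.castLE (by omega) i))
    (Fm : Subgroup (FreeGroup (Fin (m + 2)))) (hFm : Fm = Subgroup.closure Sgen)
    (a₁ a₂ : FreeGroup (Fin (m + 2)))
    (ha₁ : a₁ = FreeGroup.of ⟨m, by omega⟩) (ha₂ : a₂ = FreeGroup.of ⟨m + 1, by omega⟩)
    (hφFm : Subgroup.map φ.toMonoidHom Fm = Fm)
    (hφa₁ : φ a₁ = a₂) (w v : FreeGroup (Fin (m + 2))) (hw : w ∈ Fm) (hv : v ∈ Fm)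
    (hφa₂ : φ a₂ = w * a₁ * v) :
    ∀ k : ℕ, Odd k →
      (∃ wk ∈ Fm, ∃ vk ∈ Fm, (φ ^ k) a₁ = wk * a₂ * vk) ∧
      (∃ wk' ∈ Fm, ∃ vk' ∈ Fm, (φ ^ k) a₂ = wk' * a₁ * vk') ∧
      Subgroup.closure
        ((SemidirectProduct.inl '' (Sgen ∪ {a₁})) ∪
          {(SemidirectProduct.inr (Multiplicative.ofAdd (1 : ℤ)) :
            FreeGroup (Fin (m + 2)) ⋊[zpowersHom (MulAut (FreeGroup (Fin (m + 2)))) (φ ^ k)]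
              Multiplicative ℤ)}) = ⊤ ∧
      ∃ C : Finset (FreeGroup (Fin (m + 2))
          ⋊[zpowersHom (MulAut (FreeGroup (Fin (m + 2)))) (φ ^ k)] Multiplicative ℤ),
        Subgroup.closure (↑C : Set (FreeGroup (Fin (m + 2))
            ⋊[zpowersHom (MulAut (FreeGroup (Fin (m + 2)))) (φ ^ k)] Multiplicative ℤ)) = ⊤ ∧
          C.card ≤ m + 2 ∧
          m + 2 < Group.rank (FreeGroup (Fin (m + 2))) + 1 := by
  classical
  -- φ and its powers preserve Fm
  have hφmem : ∀ x ∈ Fm, φ x ∈ Fm := by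
    intro x hx
    rw [← hφFm]
    exact ⟨x, hx, rfl⟩
  have hφkmem : ∀ j : ℕ, ∀ x ∈ Fm, (φ ^ j) x ∈ Fm := by
    intro j
    induction j with
    | zero => intro x hx; simpa using hx
    | succ j ih =>
      intro x hx
      have : (φ ^ (j + 1)) x = (φ ^ j) (φ x) := by rw [pow_succ]; rfl
      rw [this]
      exact ih _ (hφmem x hx)
  -- key parity induction
  have key : ∀ j : ℕ,
      (Even j → (∃ p ∈ Fm, ∃ q ∈ Fm, (φ ^ j) a₁ = p * a₁ * q) ∧
        (∃ p ∈ Fm, ∃ q ∈ Fm, (φ ^ j) a₂ = p * a₂ * q)) ∧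
      (Odd j → (∃ p ∈ Fm, ∃ q ∈ Fm, (φ ^ j) a₁ = p * a₂ * q) ∧
        (∃ p ∈ Fm, ∃ q ∈ Fm, (φ ^ j) a₂ = p * a₁ * q)) := by
    intro j
    induction j with
    | zero =>
      refine ⟨fun _ => ⟨⟨1, one_mem _, 1, one_mem _, by simp⟩,
        ⟨1, one_mem _, 1, one_mem _, by simp⟩⟩, fun h => absurd h (by simp)⟩
    | succ j ih =>
      have hstep : ∀ x, (φ ^ (j + 1)) x = (φ ^ j) (φ x) := by
        intro x; rw [pow_succ]; rfl
      constructor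
      · intro hev
        have hodd : Odd j := Nat.Even.sub_odd (by omega) hev odd_one
        obtain ⟨⟨p, hp, q, hq, h1⟩, ⟨r, hr, s, hs, h2⟩⟩ := ih.2 hodd
        refine ⟨⟨r, hr, s, hs, ?_⟩, ⟨(φ ^ j) w * p, mul_mem (hφkmem j w hw) hp,
          q * (φ ^ j) v, mul_mem hq (hφkmem j v hv), ?_⟩⟩
        · rw [hstep, hφa₁, h2]
        · rw [hstep, hφa₂, map_mul, map_mul, h1]; group
      · intro hodd
        have hev : Even j := Nat.not_odd_iff_even.mp (Nat.odd_add_one.mp hodd)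
        obtain ⟨⟨p, hp, q, hq, h1⟩, ⟨r, hr, s, hs, h2⟩⟩ := ih.1 hev
        refine ⟨⟨r, hr, s, hs, ?_⟩, ⟨(φ ^ j) w * p, mul_mem (hφkmem j w hw) hp,
          q * (φ ^ j) v, mul_mem hq (hφkmem j v hv), ?_⟩⟩
        · rw [hstep, hφa₁, h2]
        · rw [hstep, hφa₂, map_mul, map_mul, h1]; group
  intro k hk
  obtain ⟨⟨wk, hwk, vk, hvk, heq1⟩, ⟨wk', hwk', vk', hvk', heq2⟩⟩ := (key k).2 hk
  set t : FreeGroup (Fin (m + 2))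
      ⋊[zpowersHom (MulAut (FreeGroup (Fin (m + 2)))) (φ ^ k)] Multiplicative ℤ :=
    SemidirectProduct.inr (Multiplicative.ofAdd (1 : ℤ)) with htdef
  set N := Subgroup.closure ((SemidirectProduct.inl '' (Sgen ∪ {a₁})) ∪ {t}) with hN
  have hactt : (zpowersHom (MulAut (FreeGroup (Fin (m + 2)))) (φ ^ k))
      (Multiplicative.ofAdd (1 : ℤ)) = φ ^ k := by
    simp
  have htN : t ∈ N := Subgroup.subset_closure (Or.inr rfl)
  have ha1N : (inl a₁ : _) ∈ N := Subgroup.subset_closure (Or.inl ⟨a₁, Or.inr rfl, rfl⟩)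
  have hFmN : ∀ x ∈ Fm, (inl x : _) ∈ N := by
    intro x hx
    have hle : Fm ≤ Subgroup.comap (inl : _ →* _) N := by
      rw [hFm]
      exact (Subgroup.closure_le _).mpr
        (fun s hs => Subgroup.subset_closure (Or.inl ⟨s, Or.inl hs, rfl⟩))
    exact hle hx
  have hφkN : (inl ((φ ^ k) a₁) : _) ∈ N := by
    have h := SemidirectProduct.inl_aut
      (φ := zpowersHom (MulAut (FreeGroup (Fin (m + 2)))) (φ ^ k))
      (Multiplicative.ofAdd (1 : ℤ)) a₁
    rw [hactt, map_inv] at h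
    rw [h]
    exact mul_mem (mul_mem htN ha1N) (inv_mem htN)
  have ha2N : (inl a₂ : _) ∈ N := by
    have h : a₂ = wk⁻¹ * ((φ ^ k) a₁) * vk⁻¹ := by rw [heq1]; group
    rw [h, map_mul, map_mul]
    exact mul_mem (mul_mem (hFmN _ (inv_mem hwk)) hφkN) (hFmN _ (inv_mem hvk))
  have hinlN : ∀ x : FreeGroup (Fin (m + 2)), (inl x : _) ∈ N := by
    intro x
    have hx : x ∈ Subgroup.closure (Set.range (FreeGroup.of : Fin (m + 2) → _)) := by
      rw [FreeGroup.closure_range_of]; trivial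
    induction hx using Subgroup.closure_induction with
    | mem g hg =>
      obtain ⟨i, rfl⟩ := hg
      rcases lt_trichotomy i.val m with h | h | h
      · refine Subgroup.subset_closure (Or.inl ⟨FreeGroup.of i, Or.inl ?_, rfl⟩)
        rw [hSgen]
        refine ⟨⟨i.val, h⟩, ?_⟩
        congr 1
      · have hi : i = ⟨m, by omega⟩ := Fin.ext h
        rw [hi, ← ha₁]; exact ha1N
      · have hi : i = ⟨m + 1, by omega⟩ := Fin.ext (show i.val = m + 1 by have := i.isLt; omega)
        rw [hi, ← ha₂]; exact ha2N
    | one => simpa using one_mem N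
    | mul a b _ _ ha hb => rw [map_mul]; exact mul_mem ha hb
    | inv a _ ha => rw [map_inv]; exact inv_mem ha
  have hinrN : ∀ z : Multiplicative ℤ, (inr z : _) ∈ N := by
    intro z
    have h : (inr z : _) = t ^ (Multiplicative.toAdd z) := by
      rw [htdef, ← map_zpow]
      congr 1
      rw [← ofAdd_zsmul, smul_eq_mul, mul_one, ofAdd_toAdd]
    rw [h]
    exact zpow_mem htN _
  have hclosTop : N = ⊤ := by
    rw [eq_top_iff]
    intro g _
    rw [← SemidirectProduct.inl_left_mul_inr_right g]
    exact mul_mem (hinlN _) (hinrN _)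
  refine ⟨⟨wk, hwk, vk, hvk, heq1⟩, ⟨wk', hwk', vk', hvk', heq2⟩, hclosTop, ?_⟩
  refine ⟨insert (inl a₁) (insert t ((Finset.univ : Finset (Fin m)).image
    (fun i => inl (FreeGroup.of (Fin.castLE (by omega) i))))), ?_, ?_, ?_⟩
  · rw [eq_top_iff, ← hclosTop]
    apply Subgroup.closure_mono
    intro x hx
    simp only [Finset.coe_insert, Set.mem_insert_iff, Finset.coe_image, Finset.coe_univ,
      Set.image_univ, Set.mem_range, Set.mem_union, Set.mem_image, Set.mem_singleton_iff] at hx ⊢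
    rcases hx with ⟨y, hy | hy, rfl⟩ | hx
    · rw [hSgen] at hy
      obtain ⟨i, rfl⟩ := hy
      exact Or.inr (Or.inr ⟨i, rfl⟩)
    · exact Or.inl (by rw [hy])
    · exact Or.inr (Or.inl hx)
  · refine le_trans (Finset.card_insert_le _ _) ?_
    refine le_trans (Nat.add_le_add_right (Finset.card_insert_le _ _) 1) ?_
    refine le_trans (Nat.add_le_add_right (Nat.add_le_add_right Finset.card_image_le 1) 1) ?_
    simp
  · have := freeGroup_rank_lower (m + 2)
    omega
end
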